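/- arXiv:2402.03489 — 2 statements merged into one kernel-verified Lean document; each statement's English description precedes it below -/
import Mathlib

section
/- Let k ∈ ℤ and X₀ ∈ 𝒮 with X₀(k) < ∞. Then for any probability distribution μ on ℕ, the IBM(μ) started from X₀ satisfies {X_∞(k) = ∞} ⊆ {X_∞(k−1) = ∞} up to a null set (almost surely). -/
open MeasureTheory ProbabilityTheory Filter Set
open scoped ENNReal Topology Classical

noncomputable section

/-- A configuration of balls: the number of balls (in `ℤ₊ ∪ {∞}`) in each bin. -/
abbrev Config := ℤ → ℕ∞

/-- A valid configuration: the support is nonempty and bounded above. -/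
def IsConfig (X : Config) : Prop :=
  (∃ j, X j ≠ 0) ∧ ∃ M : ℤ, ∀ j, X j ≠ 0 → j ≤ M

/-- `tailSum X j = ∑_{i ≥ j} X i`. -/
def tailSum (X : Config) (j : ℤ) : ℕ∞ :=
  ⨆ m : ℤ, ∑ i ∈ Finset.Icc j m, X i

/-- One step of the infinite-bin model dynamics: `Phi ξ X` adds one ball to the bin
immediately to the right of the bin containing the `ξ`-th rightmost ball of `X`
(i.e. to bin `B(X,ξ) + 1` where `B(X,ξ) = sup {j : ∑_{i ≥ j} X i ≥ ξ}`), and does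
nothing when `B(X,ξ) = -∞`, i.e. when no bin `j` satisfies `∑_{i ≥ j} X i ≥ ξ`. -/
def Phi (ξ : ℕ) (X : Config) : Config := fun j =>
  X j + (if (ξ : ℕ∞) ≤ tailSum X (j - 1) ∧ ¬ (ξ : ℕ∞) ≤ tailSum X j then 1 else 0)

/-- The infinite-bin model driven by the sequence `ξ`, started from `X₀`:
`X_{n+1} = Phi (ξ n) X_n`. -/
def ibm (X₀ : Config) (ξ : ℕ → ℕ) : ℕ → Config
  | 0 => X₀
  | n + 1 => Phi (ξ n) (ibm X₀ ξ n)

/-- `X_∞(k)`: the limit (= supremum, by monotonicity) of the number of balls in bin `k`. -/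
def ibmLimit (X₀ : Config) (ξ : ℕ → ℕ) (k : ℤ) : ℕ∞ :=
  ⨆ n, ibm X₀ ξ n k

/-- `ξ` is a sequence of i.i.d. random variables with law `μ` on `(Ω, P)`. -/
def IsIIDSeq {Ω : Type*} [MeasurableSpace Ω] (P : Measure Ω) (μ : Measure ℕ)
    (ξ : ℕ → Ω → ℕ) : Prop :=
  (∀ n, Measurable (ξ n)) ∧
    iIndepFun ξ P ∧ ∀ n, P.map (ξ n) = μ

/-- The barrier configuration `X̂₀`: an infinite bin at `0`, all other bins empty. -/
def barrier : Config := fun j => if j = 0 then ⊤ else 0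

/-- The tail `μ̄(j) = μ({j, j+1, ...})` of a distribution on `ℕ`. -/
def tailμ (μ : Measure ℕ) (j : ℕ) : ℝ≥0∞ := μ {i | j ≤ i}

/-- `μ` (represented by the i.i.d. driving sequence `ξ` on `(Ω, P)`) is of type `d`:
almost surely, `d = inf {k ≥ 1 : X̂_∞(k) < ∞}` for the IBM started from the barrier
configuration (with `inf ∅ = ∞` in `ℕ ∪ {∞}`). -/
def IsTypeOf {Ω : Type*} [MeasurableSpace Ω] (P : Measure Ω) (ξ : ℕ → Ω → ℕ)
    (d : ℕ∞) : Prop :=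
  ∀ᵐ ω ∂P, sInf {k : ℕ∞ | ∃ m : ℕ, 1 ≤ m ∧ k = (m : ℕ∞) ∧
    ibmLimit barrier (fun i => ξ i ω) (m : ℤ) < ⊤} = d

/-- `δ ∈ ℤ ∪ {-∞}` is the position `δ(X) = sup {j : X j = ∞}` of the rightmost
infinite bin ("barrier") of `X`, with `sup ∅ = -∞ = ⊥`. -/
def IsRightmostBarrier (X : Config) (δ : WithBot ℤ) : Prop :=
  (∀ j : ℤ, X j = ⊤ → (j : WithBot ℤ) ≤ δ) ∧
    (∀ j : ℤ, (j : WithBot ℤ) ≤ δ → ∃ i : ℤ, j ≤ i ∧ X i = ⊤)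

end


/-!
Write `T_n` for the number of balls in the bins `≥ k` after `n` steps. Bin `k` gains a ball at
step `n` exactly when `T_n < ξ_n ≤ T_n + X_n(k-1)`, so if `X_∞(k-1) ≤ c` this forces `ξ_n` into a
window of length `c` just above the current level `T_n`. A level `t ≥ t₀` is left for good as
soon as `ξ_n ∈ [1, t₀]`, an event of probability `p = μ[1, t₀] > 0` independent of the past
(such `t₀` exists because `μ {0} = 0`), so the expected time spent at level `t` is at most `1/p`.
Since `∑_t μ(t, t + c] ≤ c`, the expected number of steps at which bin `k` can gain a ball is at
most `c / p`; by Borel–Cantelli bin `k` then receives only finitely many balls.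
-/

open Function

lemma frequently_ne_succ_of_iSup_eq_top {α : Type*} [CompleteLattice α] {f : ℕ → α}
    (hf : Monotone f) (hfin : ∀ n, f n ≠ ⊤) (hsup : ⨆ n, f n = ⊤) :
    ∃ᶠ n in atTop, f (n + 1) ≠ f n := by
  intro h
  obtain ⟨N, hN⟩ := eventually_atTop.1 h
  have hconst : ∀ n ≥ N, f n = f N :=
    Nat.le_induction rfl fun n hn ih => (not_not.1 (hN n hn)).trans ih
  refine hfin N (top_le_iff.1 (hsup ▸ iSup_le fun n => ?_))
  exact (le_total n N).elim (fun h => hf h) fun h => (hconst n h).le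

section Deterministic

variable {X : Config} {ξ : ℕ} {j M : ℤ}

lemma tailSum_mono {X Y : Config} (h : X ≤ Y) (j : ℤ) : tailSum X j ≤ tailSum Y j :=
  iSup_mono fun _ => Finset.sum_le_sum fun i _ => h i

lemma sum_Icc_le_tailSum (X : Config) (j m : ℤ) : ∑ i ∈ Finset.Icc j m, X i ≤ tailSum X j :=
  le_iSup (fun m => ∑ i ∈ Finset.Icc j m, X i) m

lemma tailSum_eq_add_tailSum_succ (X : Config) (j : ℤ) :
    tailSum X j = X j + tailSum X (j + 1) := by
  have split (m : ℤ) :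
      ∑ i ∈ Finset.Icc j (max j m), X i = X j + ∑ i ∈ Finset.Icc (j + 1) m, X i := by
    rw [← Finset.add_sum_Ioc_eq_sum_Icc (le_max_left j m), ← Finset.Icc_add_one_left_eq_Ioc]
    rcases le_total j m with hm | hm
    · rw [max_eq_right hm]
    · rw [max_eq_left hm, Finset.Icc_eq_empty_of_lt (by omega),
        Finset.Icc_eq_empty_of_lt (by omega)]
  rw [tailSum, tailSum, ENat.add_iSup]
  refine le_antisymm (iSup_le fun m => ?_) (iSup_le fun m => ?_)
  · refine le_iSup_of_le m (split m ▸ ?_)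
    exact Finset.sum_le_sum_of_subset (Finset.Icc_subset_Icc_right (le_max_right j m))
  · rw [← split]
    exact le_iSup_of_le (max j m) le_rfl

lemma le_tailSum (X : Config) (j : ℤ) : X j ≤ tailSum X j := by
  simpa using sum_Icc_le_tailSum X j j

lemma tailSum_le_sum_Icc (hX : ∀ i, X i ≠ 0 → i ≤ M) (j : ℤ) :
    tailSum X j ≤ ∑ i ∈ Finset.Icc j M, X i :=
  iSup_le fun _ => Finset.sum_le_sum_of_ne_zero fun i hi hXi => by
    simp only [Finset.mem_Icc] at hi ⊢
    exact ⟨hi.1, hX i hXi⟩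

lemma tailSum_eq_zero_of_lt (hX : ∀ i, X i ≠ 0 → i ≤ M) (hj : M < j) :
    tailSum X j = 0 := by
  simpa [Finset.Icc_eq_empty_of_lt hj] using tailSum_le_sum_Icc hX j

lemma le_Phi (ξ : ℕ) (X : Config) : X ≤ Phi ξ X := fun _ => le_self_add

lemma Phi_le_add_one (ξ : ℕ) (X : Config) (j : ℤ) : Phi ξ X j ≤ X j + 1 := by
  unfold Phi
  gcongr
  split_ifs <;> simp

lemma Phi_support_le (hX : ∀ i, X i ≠ 0 → i ≤ M) : ∀ i, Phi ξ X i ≠ 0 → i ≤ M + 1 := by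
  intro i hi
  by_contra! hiM
  have hXi : X i = 0 := by_contra fun h => by linarith [hX i h]
  have hT : tailSum X (i - 1) = 0 := tailSum_eq_zero_of_lt hX (by omega)
  exact hi (by simp +contextual [Phi, hXi, hT])

lemma add_one_le_tailSum_Phi (hX : ∀ i, X i ≠ 0 → i ≤ M) (hξ : 1 ≤ ξ)
    (h : (ξ : ℕ∞) ≤ tailSum X j) : tailSum X j + 1 ≤ tailSum (Phi ξ X) j := by
  have hbdd : ∀ b, (ξ : ℕ∞) ≤ tailSum X b → b ≤ M := fun b hb => by
    by_contra! hbM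
    rw [tailSum_eq_zero_of_lt hX hbM, nonpos_iff_eq_zero, Nat.cast_eq_zero] at hb
    omega
  -- `B` is `B(X, ξ)`: the ball of this step goes to bin `B + 1 > j`.
  obtain ⟨B, hB, hBmax⟩ := Int.exists_greatest_of_bdd ⟨M, hbdd⟩ ⟨j, h⟩
  have hjB : j ≤ B := hBmax j h
  have hBM : B ≤ M := hbdd B hB
  have hnext : ¬ (ξ : ℕ∞) ≤ tailSum X (B + 1) := fun h' => by linarith [hBmax _ h']
  set ball : ℤ → ℕ∞ := fun i =>
    if (ξ : ℕ∞) ≤ tailSum X (i - 1) ∧ ¬ (ξ : ℕ∞) ≤ tailSum X i then 1 else 0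
  have hball : ball (B + 1) = 1 := if_pos ⟨by simpa using hB, hnext⟩
  calc tailSum X j + 1
      ≤ ∑ i ∈ Finset.Icc j (M + 1), X i + ∑ i ∈ Finset.Icc j (M + 1), ball i := by
        gcongr
        · exact tailSum_le_sum_Icc (fun i hi => (hX i hi).trans (by omega)) j
        · exact hball ▸ Finset.single_le_sum (fun _ _ => zero_le)
            (Finset.mem_Icc.2 ⟨by omega, by omega⟩)
    _ = ∑ i ∈ Finset.Icc j (M + 1), Phi ξ X i := Finset.sum_add_distrib.symm
    _ ≤ tailSum (Phi ξ X) j := sum_Icc_le_tailSum _ _ _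

lemma window_of_Phi_apply_ne (h : Phi ξ X j ≠ X j) :
    tailSum X j < ξ ∧ (ξ : ℕ∞) ≤ X (j - 1) + tailSum X j := by
  have hcond : (ξ : ℕ∞) ≤ tailSum X (j - 1) ∧ ¬ (ξ : ℕ∞) ≤ tailSum X j := by
    by_contra hc
    exact h (by simp only [Phi, if_neg hc, add_zero])
  refine ⟨not_le.1 hcond.2, ?_⟩
  have hsplit := tailSum_eq_add_tailSum_succ X (j - 1)
  rw [sub_add_cancel] at hsplit
  exact hsplit ▸ hcond.1

end Deterministic

section IBM

variable {X₀ : Config} {M k : ℤ}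

lemma ibm_support_le (hX₀ : ∀ i, X₀ i ≠ 0 → i ≤ M) (u : ℕ → ℕ) :
    ∀ n i, ibm X₀ u n i ≠ 0 → i ≤ M + n := by
  intro n
  induction n with
  | zero => simpa [ibm] using hX₀
  | succ n ih =>
    intro i hi
    have hle := Phi_support_le ih i hi
    push_cast
    omega

lemma monotone_ibm (u : ℕ → ℕ) (j : ℤ) : Monotone fun n => ibm X₀ u n j :=
  monotone_nat_of_le_succ fun _ => le_Phi _ _ j

lemma monotone_tailSum_ibm (u : ℕ → ℕ) (k : ℤ) : Monotone fun n => tailSum (ibm X₀ u n) k :=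
  fun _ _ h => tailSum_mono (fun i => monotone_ibm u i h) k

lemma ibm_ne_top (hk : X₀ k < ⊤) (u : ℕ → ℕ) (n : ℕ) : ibm X₀ u n k ≠ ⊤ := by
  induction n with
  | zero => exact hk.ne
  | succ n ih =>
    exact ne_top_of_le_ne_top (WithTop.add_ne_top.2 ⟨ih, WithTop.one_ne_top⟩) (Phi_le_add_one _ _ k)

lemma ibm_dependsOn (X₀ : Config) (n : ℕ) : DependsOn (fun u => ibm X₀ u n) (Set.Iio n) := by
  induction n with
  | zero => exact fun _ _ _ => rfl
  | succ n ih =>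
    intro u v h
    change Phi (u n) (ibm X₀ u n) = Phi (v n) (ibm X₀ v n)
    rw [show ibm X₀ u n = ibm X₀ v n from ih fun i hi => h i (Nat.lt_succ_of_lt hi),
      h n (Nat.lt_succ_self n)]

lemma tailSum_ibm_ne_of_lt (hX₀ : ∀ i, X₀ i ≠ 0 → i ≤ M) {u : ℕ → ℕ} {n n' t : ℕ}
    (hT : tailSum (ibm X₀ u n) k = t) (h1 : 1 ≤ u n) (ht : u n ≤ t) (hnn' : n < n') :
    tailSum (ibm X₀ u n') k ≠ t := by
  intro hT'
  have hup := add_one_le_tailSum_Phi (ibm_support_le hX₀ u n) h1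
    (hT ▸ (by exact_mod_cast ht : (u n : ℕ∞) ≤ t))
  have hmono : tailSum (ibm X₀ u (n + 1)) k ≤ tailSum (ibm X₀ u n') k :=
    monotone_tailSum_ibm u k hnn'
  rw [hT] at hup
  rw [hT'] at hmono
  exact absurd (hup.trans hmono) (by norm_cast; omega)

end IBM

section Independence

variable {Ω β : Type*} [MeasurableSpace β]

abbrev pastMeasurableSpace (ξ : ℕ → Ω → β) (n : ℕ) : MeasurableSpace Ω :=
  ⨆ i ∈ Set.Iio n, MeasurableSpace.comap (ξ i) inferInstance

lemma measurable_pastMeasurableSpace (ξ : ℕ → Ω → β) {n i : ℕ} (hi : i < n) :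
    Measurable[pastMeasurableSpace ξ n] (ξ i) :=
  measurable_iff_comap_le.2 (le_iSup₂ (f := fun j (_ : j ∈ Set.Iio n) =>
    MeasurableSpace.comap (ξ j) inferInstance) i hi)

lemma pastMeasurableSpace_le [MeasurableSpace Ω] {ξ : ℕ → Ω → β} (hξ : ∀ i, Measurable (ξ i))
    (n : ℕ) : pastMeasurableSpace ξ n ≤ ‹MeasurableSpace Ω› :=
  iSup₂_le fun i _ => (hξ i).comap_le

lemma measurableSet_pastMeasurableSpace_of_dependsOn [Countable β] [MeasurableSingletonClass β]
    (ξ : ℕ → Ω → β) {n : ℕ} {S : Set (ℕ → β)} (hS : DependsOn (· ∈ S) (Set.Iio n)) :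
    MeasurableSet[pastMeasurableSpace ξ n] {ω | (fun i => ξ i ω) ∈ S} := by
  let restrict : (ℕ → β) → (Set.Iio n → β) := fun u i => u i
  have hpre : {ω | (fun i => ξ i ω) ∈ S} =
      (fun ω => restrict fun i => ξ i ω) ⁻¹' (restrict '' S) := by
    ext ω
    refine ⟨fun h => ⟨_, h, rfl⟩, fun ⟨u, hu, hR⟩ => ?_⟩
    have : (u ∈ S) = ((fun i => ξ i ω) ∈ S) := hS fun i hi => congrFun hR ⟨i, hi⟩
    exact this ▸ hu
  let := pastMeasurableSpace ξ n
  have hmeas : Measurable fun ω => restrict fun i => ξ i ω :=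
    measurable_pi_iff.2 fun i => measurable_pastMeasurableSpace ξ i.2
  rw [hpre]
  exact hmeas (Set.to_countable _).measurableSet

variable [MeasurableSpace Ω] {P : Measure Ω} {μ : Measure ℕ}
  {ξ : ℕ → Ω → ℕ}

lemma IsIIDSeq.measure_inter_preimage_eq_mul (hξ : IsIIDSeq P μ ξ) {n : ℕ} {A : Set Ω}
    (hA : MeasurableSet[pastMeasurableSpace ξ n] A) (W : Set ℕ) :
    P (A ∩ ξ n ⁻¹' W) = P A * μ W := by
  have hind := indep_iSup_of_disjoint (fun i => (hξ.1 i).comap_le)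
    ((iIndepFun_iff_iIndep _ _ _).1 hξ.2.1) (S := Set.Iio n) (T := {n}) (by simp)
  rw [Indep_iff] at hind
  have hW : MeasurableSet[⨆ i ∈ ({n} : Set ℕ), MeasurableSpace.comap (ξ i) inferInstance]
      (ξ n ⁻¹' W) :=
    le_iSup₂ (f := fun j (_ : j ∈ ({n} : Set ℕ)) => MeasurableSpace.comap (ξ j) inferInstance)
      n rfl _ ⟨W, MeasurableSet.of_discrete, rfl⟩
  rw [hind A _ hA hW, ← hξ.2.2 n, Measure.map_apply (hξ.1 n) MeasurableSet.of_discrete]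

lemma IsIIDSeq.tsum_measure_le_inv [IsProbabilityMeasure P] (hξ : IsIIDSeq P μ ξ) {A : ℕ → Set Ω}
    (hA : ∀ n, MeasurableSet[pastMeasurableSpace ξ n] (A n))
    {W : Set ℕ} (hdisj : Pairwise (Disjoint on fun n => A n ∩ ξ n ⁻¹' W)) :
    ∑' n, P (A n) ≤ (μ W)⁻¹ := by
  rw [ENNReal.le_inv_iff_mul_le, ← ENNReal.tsum_mul_right]
  calc ∑' n, P (A n) * μ W = ∑' n, P (A n ∩ ξ n ⁻¹' W) := by
        simp_rw [hξ.measure_inter_preimage_eq_mul (hA _)]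
    _ = P (⋃ n, A n ∩ ξ n ⁻¹' W) :=
        (measure_iUnion hdisj fun n => (pastMeasurableSpace_le hξ.1 n _ (hA n)).inter
          (hξ.1 n MeasurableSet.of_discrete)).symm
    _ ≤ 1 := prob_le_one

end Independence

lemma tsum_measure_Ioc_le (μ : Measure ℕ) [IsProbabilityMeasure μ] (c : ℕ) :
    ∑' t : ℕ, μ (Set.Ioc t (t + c)) ≤ c := by
  have hIoc (t : ℕ) : Set.Ioc t (t + c) ⊆ ⋃ i ∈ Finset.range c, {t + i + 1} := fun x hx => by
    simp only [Set.mem_Ioc] at hx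
    simp only [Set.mem_iUnion, Finset.mem_range, Set.mem_singleton_iff]
    exact ⟨x - t - 1, by omega, by omega⟩
  have hdiag (i : ℕ) : ∑' t : ℕ, μ {t + i + 1} ≤ 1 := by
    rw [← measure_iUnion (fun s t hst => Set.disjoint_singleton.2 (by omega))
      fun _ => measurableSet_singleton _]
    exact prob_le_one
  calc ∑' t : ℕ, μ (Set.Ioc t (t + c))
      ≤ ∑' t : ℕ, ∑ i ∈ Finset.range c, μ {t + i + 1} :=
        ENNReal.tsum_le_tsum fun t => (measure_mono (hIoc t)).trans (measure_biUnion_finset_le _ _)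
    _ = ∑ i ∈ Finset.range c, ∑' t : ℕ, μ {t + i + 1} :=
        Summable.tsum_finsetSum fun _ _ => ENNReal.summable
    _ ≤ ∑ i ∈ Finset.range c, 1 := Finset.sum_le_sum fun i _ => hdiag i
    _ = c := by simp

lemma exists_measure_Icc_pos (μ : Measure ℕ) [IsProbabilityMeasure μ] (hμ0 : μ {0} = 0) :
    ∃ t, 0 < μ (Set.Icc 1 t) := by
  by_contra! h
  have hcompl : μ {0}ᶜ = 0 := by
    refine measure_mono_null ?_ (measure_iUnion_null fun t => nonpos_iff_eq_zero.1 (h t))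
    exact fun x hx => Set.mem_iUnion.2 ⟨x, Nat.one_le_iff_ne_zero.2 hx, le_rfl⟩
  simpa [hμ0, hcompl] using measure_add_measure_compl (μ := μ) (measurableSet_singleton 0)

section Main

variable {Ω : Type*} [MeasurableSpace Ω] {P : Measure Ω} [IsProbabilityMeasure P]
  {μ : Measure ℕ} [IsProbabilityMeasure μ] {ξ : ℕ → Ω → ℕ} {X₀ : Config} {M k : ℤ}

/-- Borel–Cantelli input: bin `k` gains a ball at step `n` only if `ξ n` falls in the window
`(T, T + X_n(k-1)]` above the number `T` of balls in bins `≥ k`. -/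
lemma IsIIDSeq.tsum_measure_window_le (hξ : IsIIDSeq P μ ξ) (hX₀ : ∀ i, X₀ i ≠ 0 → i ≤ M)
    (t₀ c : ℕ) :
    ∑' n, P {ω | (t₀ : ℕ∞) ≤ tailSum (ibm X₀ (fun i => ξ i ω) n) k ∧
      tailSum (ibm X₀ (fun i => ξ i ω) n) k < ξ n ω ∧
      (ξ n ω : ℕ∞) ≤ c + tailSum (ibm X₀ (fun i => ξ i ω) n) k} ≤ (μ (Set.Icc 1 t₀))⁻¹ * c := by
  set A : ℕ → ℕ → Set Ω := fun t n =>
    {ω | tailSum (ibm X₀ (fun i => ξ i ω) n) k = t ∧ t₀ ≤ t}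
  have hAmeas (t n : ℕ) : MeasurableSet[pastMeasurableSpace ξ n] (A t n) :=
    measurableSet_pastMeasurableSpace_of_dependsOn ξ
      (S := {u | tailSum (ibm X₀ u n) k = t ∧ t₀ ≤ t}) fun _ _ h => congrArg (fun X : Config => tailSum X k = t ∧ t₀ ≤ t) (ibm_dependsOn X₀ n h)
  have hvisits (t : ℕ) : ∑' n, P (A t n) ≤ (μ (Set.Icc 1 t₀))⁻¹ := by
    refine hξ.tsum_measure_le_inv (hAmeas t) ((pairwise_disjoint_on _).2 fun m n hmn => ?_)
    refine Set.disjoint_left.2 fun ω ⟨⟨hT, ht⟩, hW⟩ ⟨⟨hT', _⟩, _⟩ => ?_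
    exact tailSum_ibm_ne_of_lt hX₀ hT hW.1 (hW.2.trans ht) hmn hT'
  calc ∑' n, P {ω | (t₀ : ℕ∞) ≤ tailSum (ibm X₀ (fun i => ξ i ω) n) k ∧
        tailSum (ibm X₀ (fun i => ξ i ω) n) k < ξ n ω ∧
        (ξ n ω : ℕ∞) ≤ c + tailSum (ibm X₀ (fun i => ξ i ω) n) k}
      ≤ ∑' n, ∑' t, P (A t n ∩ ξ n ⁻¹' Set.Ioc t (t + c)) := by
        refine ENNReal.tsum_le_tsum fun n => (measure_mono ?_).trans (measure_iUnion_le _)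
        rintro ω ⟨ht₀, hlt, hle⟩
        lift tailSum (ibm X₀ (fun i => ξ i ω) n) k to ℕ using (hlt.trans (WithTop.coe_lt_top _)).ne
          with t ht
        refine Set.mem_iUnion.2 ⟨t, ⟨ht.symm, by exact_mod_cast ht₀⟩, ?_, ?_⟩
        · exact_mod_cast hlt
        · rw [add_comm]; exact_mod_cast hle
    _ = ∑' t, (∑' n, P (A t n)) * μ (Set.Ioc t (t + c)) := by
        simp_rw [hξ.measure_inter_preimage_eq_mul (hAmeas _ _), ← ENNReal.tsum_mul_right]
        exact ENNReal.tsum_comm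
    _ ≤ ∑' t, (μ (Set.Icc 1 t₀))⁻¹ * μ (Set.Ioc t (t + c)) := by gcongr with t; exact hvisits t
    _ ≤ (μ (Set.Icc 1 t₀))⁻¹ * c := by
        rw [ENNReal.tsum_mul_left]; gcongr; exact tsum_measure_Ioc_le μ c

lemma IsIIDSeq.ae_exists_lt_ibm_of_ibmLimit_eq_top (hξ : IsIIDSeq P μ ξ)
    (hX₀ : ∀ i, X₀ i ≠ 0 → i ≤ M) (hk : X₀ k < ⊤) {t₀ : ℕ} (ht₀ : 0 < μ (Set.Icc 1 t₀))
    (c : ℕ) :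
    ∀ᵐ ω ∂P, ibmLimit X₀ (fun i => ξ i ω) k = ⊤ →
      ∃ n, (c : ℕ∞) < ibm X₀ (fun i => ξ i ω) n (k - 1) := by
  have hsum := ne_top_of_le_ne_top (ENNReal.mul_ne_top (ENNReal.inv_ne_top.2 ht₀.ne')
    (ENNReal.natCast_ne_top c)) (hξ.tsum_measure_window_le (k := k) hX₀ t₀ c)
  filter_upwards [ae_eventually_notMem hsum] with ω hω hlim
  by_contra! hc
  set u : ℕ → ℕ := fun i => ξ i ω
  have hchange : ∃ᶠ n in atTop, ibm X₀ u (n + 1) k ≠ ibm X₀ u n k :=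
    frequently_ne_succ_of_iSup_eq_top (monotone_ibm u k) (ibm_ne_top hk u) hlim
  have hlarge : ∀ᶠ n in atTop, (t₀ : ℕ∞) < ibm X₀ u n k :=
    (tendsto_atTop_iSup (monotone_ibm u k)).eventually_const_lt
      ((WithTop.coe_lt_top t₀).trans_eq hlim.symm)
  obtain ⟨n, hch, ht₀n, hnot⟩ := (hchange.and_eventually (hlarge.and hω)).exists
  obtain ⟨hlt, hle⟩ := window_of_Phi_apply_ne hch
  exact hnot ⟨ht₀n.le.trans (le_tailSum _ k), hlt, hle.trans (add_le_add (hc n) le_rfl)⟩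

end Main

/-- For `X₀ ∈ 𝒮` with `X₀(k) < ∞`, almost surely
`{X_∞(k) = ∞} ⊆ {X_∞(k-1) = ∞}`. -/
theorem stmt9 {Ω : Type*} [MeasurableSpace Ω] (P : Measure Ω) [IsProbabilityMeasure P]
    (μ : Measure ℕ) [IsProbabilityMeasure μ] (hμ0 : μ {0} = 0)
    (ξ : ℕ → Ω → ℕ) (hξ : IsIIDSeq P μ ξ)
    (X₀ : Config) (hX₀ : IsConfig X₀) (k : ℤ) (hk : X₀ k < ⊤) :
    ∀ᵐ ω ∂P, ibmLimit X₀ (fun i => ξ i ω) k = ⊤ →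
      ibmLimit X₀ (fun i => ξ i ω) (k - 1) = ⊤ := by
  obtain ⟨t₀, ht₀⟩ := exists_measure_Icc_pos μ hμ0
  obtain ⟨-, M, hM⟩ := hX₀
  filter_upwards [ae_all_iff.2 (hξ.ae_exists_lt_ibm_of_ibmLimit_eq_top hM hk ht₀)]
    with ω hω hlim
  refine iSup_eq_top.2 fun b hb => ?_
  lift b to ℕ using hb.ne
  exact hω b hlim
end

section
/- A probability distribution μ on ℕ is of type 1, i.e. the IBM(μ) started from the barrier configuration X̂₀ satisfies X̂_∞(1) < ∞ almost surely, if and only if μ has a first moment: ∑_{n≥1} n μ(n) < ∞. -/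
/-! Started from the barrier, after `n` steps exactly `n` balls lie to the right of bin `0`, so
the next ball goes to bin `1` precisely when `ξ n > n`, i.e. when it is drawn from the barrier.
Thus `X̂_∞(1) < ∞` iff only finitely many of the independent events `{ξ n > n}` occur, and by
the two Borel–Cantelli lemmas this holds almost surely iff `∑ₙ P(ξ > n) = ∑ₙ n μ(n)` is finite. -/

open MeasureTheory ProbabilityTheory Filter Set
open scoped ENNReal Topology Classical

open Finset in
theorem tailSum_antitone (X : Config) : Antitone (tailSum X) := fun _ _ h =>
  iSup_mono fun _ => sum_le_sum_of_subset (Icc_subset_Icc_left h)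

open Finset in
theorem tailSum_eq_top_of_le {X : Config} {i j : ℤ} (hi : X i = ⊤) (hj : j ≤ i) :
    tailSum X j = ⊤ :=
  top_le_iff.mp <| hi ▸ (single_le_sum (fun _ _ => zero_le) (by simp [hj])).trans
    (le_iSup (fun m => ∑ i ∈ Icc j m, X i) i)

theorem tailSum_eq_zero {X : Config} {j : ℤ} (h : ∀ i, j ≤ i → X i = 0) : tailSum X j = 0 :=
  le_antisymm (iSup_le fun _ => (Finset.sum_eq_zero fun i hi => h i (Finset.mem_Icc.mp hi).1).le)
    zero_le

open Finset in
theorem tailSum_add_single (X : Config) {p j : ℤ} (hjp : j ≤ p) :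
    tailSum (X + Pi.single p 1) j = tailSum X j + 1 := by
  have sum_eq (m : ℤ) : ∑ i ∈ Icc j (max m p), (X + Pi.single p 1 : Config) i =
      ∑ i ∈ Icc j (max m p), X i + 1 := by
    simp [sum_add_distrib, Pi.single_apply, hjp]
  have sum_mono (f : Config) (m : ℤ) : ∑ i ∈ Icc j m, f i ≤ ∑ i ∈ Icc j (max m p), f i :=
    sum_le_sum_of_subset (Icc_subset_Icc_right (le_max_left m p))
  rw [tailSum, tailSum, ENat.iSup_add]
  refine le_antisymm (iSup_mono' fun m => ⟨max m p, ?_⟩) (iSup_mono' fun m => ⟨max m p, ?_⟩)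
  · exact (sum_mono _ m).trans (sum_eq m).le
  · exact (add_le_add_left (sum_mono X m) 1).trans (sum_eq m).ge

theorem le_Phi_apply (q : ℕ) (X : Config) (j : ℤ) : X j ≤ Phi q X j := le_self_add

theorem Phi_eq_add_single {q : ℕ} {X : Config} {k : ℤ} (hk₁ : (q : ℕ∞) ≤ tailSum X (k - 1))
    (hk : ¬ (q : ℕ∞) ≤ tailSum X k) : Phi q X = X + Pi.single k 1 := by
  funext j
  have hcond : ((q : ℕ∞) ≤ tailSum X (j - 1) ∧ ¬ (q : ℕ∞) ≤ tailSum X j) ↔ j = k := by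
    refine ⟨fun ⟨hj₁, hj⟩ => le_antisymm ?_ ?_, fun h => h ▸ ⟨hk₁, hk⟩⟩
    · by_contra! hlt
      exact hk (hj₁.trans (tailSum_antitone X (by omega)))
    · by_contra! hlt
      exact hj (hk₁.trans (tailSum_antitone X (by omega)))
  simp only [Phi, Pi.add_apply, Pi.single_apply, if_congr hcond rfl rfl]

/-- The ball lands just right of the largest `j` with `q ≤ tailSum X j`. -/
theorem exists_Phi_eq_add_single {q : ℕ} {X : Config} {j₀ j₁ : ℤ}
    (h₀ : (q : ℕ∞) ≤ tailSum X j₀) (h₁ : ¬ (q : ℕ∞) ≤ tailSum X j₁) :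
    ∃ k, j₀ < k ∧ k ≤ j₁ ∧ Phi q X = X + Pi.single k 1 := by
  have hbdd : ∀ j, (q : ℕ∞) ≤ tailSum X j → j ≤ j₁ - 1 := fun j hj => by
    by_contra! hlt
    exact h₁ (hj.trans (tailSum_antitone X (by omega)))
  obtain ⟨g, hg, hmax⟩ := Int.exists_greatest_of_bdd ⟨_, hbdd⟩ ⟨j₀, h₀⟩
  have hg₁ : ¬ (q : ℕ∞) ≤ tailSum X (g + 1) := fun h => by linarith [hmax _ h]
  exact ⟨g + 1, by linarith [hmax _ h₀], by linarith [hbdd g hg],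
    Phi_eq_add_single (by simpa using hg) hg₁⟩

theorem Phi_eq_add_single_of_barrier {q n : ℕ} {X : Config} (hq : 0 < q) (h₀ : X 0 = ⊤)
    (hsupp : ∀ i : ℤ, n < i → X i = 0) (h₁ : tailSum X 1 = n) :
    ∃ k : ℤ, 1 ≤ k ∧ k ≤ n + 1 ∧ (k = 1 ↔ n < q) ∧ Phi q X = X + Pi.single k 1 := by
  by_cases hnq : n < q
  · obtain ⟨k, hk₀, hk₁, hPhi⟩ := exists_Phi_eq_add_single (q := q) (j₀ := 0) (j₁ := 1)
      (tailSum_eq_top_of_le h₀ le_rfl ▸ le_top) (by rw [h₁]; exact_mod_cast hnq.not_ge)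
    exact ⟨k, hk₀, by omega, iff_of_true (by omega) hnq, hPhi⟩
  · have hzero : tailSum X (n + 1) = 0 := tailSum_eq_zero fun i hi => hsupp i (by omega)
    obtain ⟨k, hk₀, hk₁, hPhi⟩ := exists_Phi_eq_add_single (q := q) (j₀ := 1) (j₁ := n + 1)
      (by rw [h₁]; exact_mod_cast not_lt.mp hnq) (by rw [hzero]; exact_mod_cast hq.not_ge)
    exact ⟨k, by omega, hk₁, iff_of_false (by omega) hnq, hPhi⟩

theorem Nat.bddAbove_range_count_iff {p : ℕ → Prop} [DecidablePred p] :
    BddAbove (Set.range (Nat.count p)) ↔ {n | p n}.Finite := by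
  refine ⟨fun hbdd => ?_, fun hp => ⟨_, Set.forall_mem_range.2 (Nat.count_le_card hp)⟩⟩
  by_contra hp
  rw [(Nat.surjective_count_of_infinite_setOfPred hp).range_eq] at hbdd
  exact not_bddAbove_univ hbdd

theorem ibm_barrier_apply_zero (ξs : ℕ → ℕ) (n : ℕ) : ibm barrier ξs n 0 = ⊤ := by
  induction n with
  | zero => simp [ibm, barrier]
  | succ n ih => exact top_le_iff.mp (ih ▸ le_Phi_apply _ _ 0)

theorem ibm_barrier_support_and_tailSum {ξs : ℕ → ℕ} (hξs : ∀ n, 0 < ξs n) (n : ℕ) :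
    (∀ i : ℤ, n < i → ibm barrier ξs n i = 0) ∧ tailSum (ibm barrier ξs n) 1 = n := by
  induction n with
  | zero =>
    have hsupp : ∀ i : ℤ, (0 : ℕ) < i → ibm barrier ξs 0 i = 0 := fun i hi =>
      if_neg (by omega)
    exact ⟨hsupp, by simpa using tailSum_eq_zero fun i hi => hsupp i (by omega)⟩
  | succ n ih =>
    obtain ⟨k, hk₁, hkn, -, hPhi⟩ := Phi_eq_add_single_of_barrier (hξs n)
      (ibm_barrier_apply_zero ξs n) ih.1 ih.2
    refine ⟨fun i hi => ?_, ?_⟩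
    · simp [ibm, hPhi, ih.1 i (by omega), show i ≠ k by omega]
    · rw [ibm, hPhi, tailSum_add_single _ hk₁, ih.2]
      push_cast
      rfl

theorem ibm_barrier_succ_apply_one {ξs : ℕ → ℕ} (hξs : ∀ n, 0 < ξs n) (n : ℕ) :
    ibm barrier ξs (n + 1) 1 = ibm barrier ξs n 1 + if n < ξs n then 1 else 0 := by
  obtain ⟨hsupp, htail⟩ := ibm_barrier_support_and_tailSum hξs n
  obtain ⟨k, -, -, hk, hPhi⟩ := Phi_eq_add_single_of_barrier (hξs n)
    (ibm_barrier_apply_zero ξs n) hsupp htail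
  simp [ibm, hPhi, Pi.single_apply, ← hk, eq_comm]

theorem ibm_barrier_apply_one {ξs : ℕ → ℕ} (hξs : ∀ n, 0 < ξs n) (n : ℕ) :
    ibm barrier ξs n 1 = Nat.count (fun i => i < ξs i) n := by
  induction n with
  | zero => simp [ibm, barrier]
  | succ n ih => rw [ibm_barrier_succ_apply_one hξs, ih, Nat.count_succ]; push_cast; rfl

theorem ibmLimit_barrier_one_lt_top_iff {ξs : ℕ → ℕ} (hξs : ∀ n, 0 < ξs n) :
    ibmLimit barrier ξs 1 < ⊤ ↔ {i | i < ξs i}.Finite := by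
  simp only [ibmLimit, ibm_barrier_apply_one hξs, ENat.iSup_natCast_lt_top]
  exact Nat.bddAbove_range_count_iff

theorem ProbabilityTheory.iIndepFun.iIndepSet_preimage {Ω ι β : Type*} [MeasurableSpace Ω]
    [MeasurableSpace β] {P : Measure Ω} {f : ι → Ω → β} (h : iIndepFun f P)
    (hf : ∀ i, Measurable (f i)) {s : ι → Set β} (hs : ∀ i, MeasurableSet (s i)) :
    iIndepSet (fun i => f i ⁻¹' s i) P :=
  (iIndepSet_iff_meas_biInter fun i => hf i (hs i)).2 fun S =>
    h.measure_inter_preimage_eq_mul S fun i _ => hs i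

theorem ProbabilityTheory.iIndepSet.measure_limsup_eq_zero_iff {Ω : Type*} [MeasurableSpace Ω]
    {P : Measure Ω} {s : ℕ → Set Ω} (hsm : ∀ n, MeasurableSet (s n)) (hs : iIndepSet s P) :
    P (limsup s atTop) = 0 ↔ ∑' n, P (s n) ≠ ∞ := by
  refine ⟨fun h hsum => ?_, measure_limsup_atTop_eq_zero⟩
  simpa [h] using measure_limsup_eq_one hsm hs hsum

theorem MeasureTheory.Measure.tsum_measure_Ioi_eq_tsum_mul (μ : Measure ℕ) :
    ∑' n, μ (Ioi n) = ∑' m : ℕ, (m : ℝ≥0∞) * μ {m} := by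
  have hIoi (m n : ℕ) : (Ioi n).indicator (fun m => μ {m}) m = if n < m then μ {m} else 0 := by
    simp [Set.indicator_apply]
  calc ∑' n, μ (Ioi n) = ∑' n, ∑' m, (Ioi n).indicator (fun m => μ {m}) m := by
        simp_rw [tsum_indicator_apply_singleton μ _ (.of_discrete)]
    _ = ∑' m, ∑' n, if n < m then μ {m} else 0 := by rw [ENNReal.tsum_comm]; simp_rw [hIoi]
    _ = ∑' m : ℕ, (m : ℝ≥0∞) * μ {m} := by
        refine tsum_congr fun m => ?_
        rw [tsum_eq_sum (s := Finset.range m) fun n hn => if_neg (by simpa using hn),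
          Finset.sum_ite_of_true fun n hn => Finset.mem_range.1 hn]
        simp

theorem IsIIDSeq.measure_preimage {Ω : Type*} [MeasurableSpace Ω] {P : Measure Ω}
    {μ : Measure ℕ} {ξ : ℕ → Ω → ℕ} (hξ : IsIIDSeq P μ ξ) (n : ℕ) (s : Set ℕ) :
    P (ξ n ⁻¹' s) = μ s := by
  rw [← Measure.map_apply (hξ.1 n) (.of_discrete), hξ.2.2 n]

theorem stmt18_general {Ω : Type*} [MeasurableSpace Ω] (P : Measure Ω)
    (μ : Measure ℕ) (hμ0 : μ {0} = 0)
    (ξ : ℕ → Ω → ℕ) (hξ : IsIIDSeq P μ ξ) :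
    (∀ᵐ ω ∂P, ibmLimit barrier (fun i => ξ i ω) 1 < ⊤) ↔
      ∑' n : ℕ, (n : ℝ≥0∞) * μ {n} < ⊤ := by
  have hpos : ∀ᵐ ω ∂P, ∀ n, 0 < ξ n ω := ae_all_iff.2 fun n => by
    rw [ae_iff, ← hμ0, ← hξ.measure_preimage n]
    simp [Nat.pos_iff_ne_zero, Set.preimage]
  have hlimit : (∀ᵐ ω ∂P, ibmLimit barrier (fun i => ξ i ω) 1 < ⊤) ↔
      P (limsup (fun n => ξ n ⁻¹' Ioi n) atTop) = 0 := by
    rw [measure_eq_zero_iff_ae_notMem]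
    refine eventually_congr (hpos.mono fun ω hω => ?_)
    rw [ibmLimit_barrier_one_lt_top_iff hω, mem_limsup_iff_frequently_mem,
      Nat.frequently_atTop_iff_infinite, Set.not_infinite]
    rfl
  rw [hlimit, (hξ.2.1.iIndepSet_preimage hξ.1 fun _ => measurableSet_Ioi).measure_limsup_eq_zero_iff
    (fun n => hξ.1 n measurableSet_Ioi), lt_top_iff_ne_top,
    ← Measure.tsum_measure_Ioi_eq_tsum_mul]
  simp_rw [hξ.measure_preimage]

/-- `μ` is of type 1, i.e. `X̂_∞(1) < ∞` a.s. for the IBM(μ) started from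
the barrier configuration, if and only if `μ` has a first moment: `∑ n μ(n) < ∞`. -/
theorem stmt18 {Ω : Type*} [MeasurableSpace Ω] (P : Measure Ω) [IsProbabilityMeasure P]
    (μ : Measure ℕ) [IsProbabilityMeasure μ] (hμ0 : μ {0} = 0)
    (ξ : ℕ → Ω → ℕ) (hξ : IsIIDSeq P μ ξ) :
    (∀ᵐ ω ∂P, ibmLimit barrier (fun i => ξ i ω) 1 < ⊤) ↔
      ∑' n : ℕ, (n : ℝ≥0∞) * μ {n} < ⊤ :=
  stmt18_general P μ hμ0 ξ hξ
end
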